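/- arXiv:1206.0398 — 3 statements merged into one kernel-verified Lean document; each statement's English description precedes it below -/
import Mathlib

section
/- (Matthews bound) For an irreducible Markov chain on a finite state space V, the cover time satisfies t_cov ≤ t_hit · (log|V| + 1), where t_cov = max_x E^x(τ_cov) and t_hit = max_{x,y} E^x(τ_y). -/
noncomputable section
open scoped Classical
open MeasureTheory ENNReal Filter

variable {V : Type*}

/-- Dirichlet energy of a function on a weighted graph. -/
def energy [Fintype V] (μ : V → V → ℝ) (f : V → ℝ) : ℝ :=
  (1/2) * ∑ u : V, ∑ v : V, μ u v * (f u - f v)^2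

/-- Effective resistance between two vertices of a finite weighted graph. -/
def Reff [Fintype V] (μ : V → V → ℝ) (x y : V) : ℝ :=
  if x = y then 0
  else (sInf {E : ℝ | ∃ f : V → ℝ, f x = 1 ∧ f y = 0 ∧ E = energy μ f})⁻¹

/-- Resistance diameter. -/
def diamR [Fintype V] (μ : V → V → ℝ) : ℝ := ⨆ x : V, ⨆ y : V, Reff μ x y

/-- Resistance ball. -/
def ballEff [Fintype V] (μ : V → V → ℝ) (x : V) (r : ℝ) : Set V := {y | Reff μ x y ≤ r}

/-- Packing number by resistance balls of radius `r`. -/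
def nPac [Fintype V] (μ : V → V → ℝ) (r : ℝ) : ℕ :=
  sSup {m | ∃ s : Finset V, s.card = m ∧
    (s : Set V).Pairwise fun a b => Disjoint (ballEff μ a r) (ballEff μ b r)}

/-- Covering number by resistance balls of radius `r`. -/
def nCov [Fintype V] (μ : V → V → ℝ) (r : ℝ) : ℕ :=
  sInf {m | ∃ s : Finset V, s.card = m ∧ ∀ y : V, ∃ x ∈ s, y ∈ ballEff μ x r}

/-- Total weight `μ(G) = ∑_{x,y} μ_{xy}`. -/
def totalWeight [Fintype V] (μ : V → V → ℝ) : ℝ := ∑ x : V, ∑ y : V, μ x y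

/-- Graph induced by the nonzero weights. -/
def weightGraph (μ : V → V → ℝ) : SimpleGraph V where
  Adj x y := x ≠ y ∧ (μ x y ≠ 0 ∨ μ y x ≠ 0)
  symm := ⟨fun x y h => ⟨h.1.symm, h.2.symm⟩⟩
  loopless := ⟨fun x h => h.1 rfl⟩

/-- Unit weights on the edges of a simple graph. -/
def unitWeight (G : SimpleGraph V) (x y : V) : ℝ := if G.Adj x y then 1 else 0

/-- One-step transition probabilities of the random walk with conductances μ. -/
def walkStep [Fintype V] (μ : V → V → ℝ) (x y : V) : ℝ := μ x y / ∑ z : V, μ x z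

/-- `P x` is the law on path space of the Markov chain with one-step transition
matrix `p` started at `x`, characterized by its cylinder probabilities. -/
def IsChainLaw [Fintype V] [MeasurableSpace V] (p : V → V → ℝ)
    (P : V → Measure (ℕ → V)) : Prop :=
  (∀ x, IsProbabilityMeasure (P x)) ∧
  ∀ (x : V) (n : ℕ) (s : ℕ → V),
    P x {ω | ∀ i ≤ n, ω i = s i} =
      (if s 0 = x then 1 else 0) *
        ∏ i ∈ Finset.range n, ENNReal.ofReal (p (s i) (s (i+1)))

/-- Hitting time of a vertex along a path. -/
def hitTime (y : V) (ω : ℕ → V) : ℝ≥0∞ := ⨅ n ∈ {n : ℕ | ω n = y}, (n : ℝ≥0∞)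

/-- Cover time along a path: first time every vertex has been visited. -/
def covTime [Fintype V] (ω : ℕ → V) : ℝ≥0∞ := ⨆ y : V, hitTime y ω

/-- Expected hitting time `E^x (τ_y)`. -/
def eHit [MeasurableSpace V] (P : V → Measure (ℕ → V)) (x y : V) : ℝ≥0∞ :=
  ∫⁻ ω, hitTime y ω ∂(P x)

/-- Maximal hitting time `t_hit = max_{x,y} E^x(τ_y)`. -/
def tHit [Fintype V] [MeasurableSpace V] (P : V → Measure (ℕ → V)) : ℝ≥0∞ :=
  ⨆ x : V, ⨆ y : V, eHit P x y

/-- Cover time `t_cov = max_x E^x(τ_cov)`. -/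
def tCov [Fintype V] [MeasurableSpace V] (P : V → Measure (ℕ → V)) : ℝ≥0∞ :=
  ⨆ x : V, ∫⁻ ω, covTime ω ∂(P x)

end

open MeasureTheory ENNReal Filter ProbabilityTheory

/-!
For `u ∈ S`, the cover time of `S` exceeds that of `S.erase u` only on the event that `u` is the
last state of `S` to be visited, and there by the time the walk still needs to reach `u` once
`S.erase u` is covered. By the Markov property at that stopping time, the expected excess is at
most `t_hit · ℙ(u is visited last)`. At most one `u` is visited last, so averaging over `u ∈ S`
and inducting on `|S|` gives `E τ_S ≤ t_hit · (1 + 1/2 + ⋯ + 1/|S|) ≤ t_hit · (log |S| + 1)`.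

Hitting times are measurable because singletons are: two states that no measurable set separates
could be swapped along every path without changing any event, contradicting the cylinder formula.
-/

section Paths

variable {V : Type*}

def pathCylinder (n : ℕ) (s : ℕ → V) : Set (ℕ → V) := {ω | ∀ i ≤ n, ω i = s i}

def pathShift (m : ℕ) (ω : ℕ → V) : ℕ → V := fun k => ω (m + k)

def pathAppend (m : ℕ) (s t : ℕ → V) : ℕ → V := fun i => if i < m then s i else t (i - m)

noncomputable def covTimeOn (S : Finset V) (ω : ℕ → V) : ℝ≥0∞ := S.sup fun y => hitTime y ω

variable {y : V} {ω ω' s t : ℕ → V} {m n : ℕ} {S : Finset V}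

lemma pathAppend_of_le (h : t 0 = s m) {i : ℕ} (hi : i ≤ m) : pathAppend m s t i = s i := by
  rcases hi.lt_or_eq with hi | rfl
  · simp [pathAppend, hi]
  · simp [pathAppend, h]

@[simp]
lemma pathAppend_add (j : ℕ) : pathAppend m s t (m + j) = t j := by
  simp [pathAppend]

lemma preimage_pathShift_inter_pathCylinder (h : t 0 = s m) (k : ℕ) :
    pathShift m ⁻¹' pathCylinder k t ∩ pathCylinder m s
      = pathCylinder (m + k) (pathAppend m s t) := by
  ext ω
  simp only [Set.mem_inter_iff, Set.mem_preimage, pathCylinder, pathShift, Set.mem_ofPred_eq]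
  constructor
  · rintro ⟨hshift, hinit⟩ i hi
    rcases lt_or_ge i m with him | hmi
    · rw [pathAppend_of_le h him.le]
      exact hinit i him.le
    · obtain ⟨j, rfl⟩ := Nat.exists_eq_add_of_le hmi
      rw [pathAppend_add]
      exact hshift j (by omega)
  · intro hω
    refine ⟨fun j hj => by simpa using hω (m + j) (by omega), fun i hi => ?_⟩
    rw [hω i (by omega), pathAppend_of_le h hi]

lemma hitTime_le_of_eq (h : ω n = y) : hitTime y ω ≤ n := iInf₂_le n h

open scoped Classical in
lemma hitTime_eq_find (h : ∃ n, ω n = y) : hitTime y ω = Nat.find h :=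
  le_antisymm (hitTime_le_of_eq (Nat.find_spec h))
    (le_iInf₂ fun _ hn => Nat.cast_le.mpr (Nat.find_min' h hn))

lemma hitTime_eq_top (h : ∀ n, ω n ≠ y) : hitTime y ω = ⊤ := by
  simp [hitTime, h]

lemma hitTime_le_natCast_iff : hitTime y ω ≤ m ↔ ∃ i ≤ m, ω i = y := by
  classical
  refine ⟨fun hle => ?_, fun ⟨i, him, hi⟩ => (hitTime_le_of_eq hi).trans (Nat.cast_le.mpr him)⟩
  by_cases h : ∃ n, ω n = y
  · rw [hitTime_eq_find h, Nat.cast_le] at hle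
    exact ⟨_, hle, Nat.find_spec h⟩
  · simp [hitTime_eq_top (not_exists.mp h)] at hle

lemma natCast_lt_hitTime_iff : (m : ℝ≥0∞) < hitTime y ω ↔ ∀ i ≤ m, ω i ≠ y := by
  simpa using hitTime_le_natCast_iff.not

lemma exists_hitTime_eq_natCast (h : hitTime y ω ≠ ⊤) : ∃ n : ℕ, hitTime y ω = n := by
  by_cases hy : ∃ n, ω n = y
  · exact ⟨_, hitTime_eq_find hy⟩
  · exact absurd (hitTime_eq_top (not_exists.mp hy)) h

lemma hitTime_eq_of_agree (hagree : ∀ i ≤ n, ω i = ω' i) (hle : hitTime y ω ≤ n) :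
    hitTime y ω' = hitTime y ω := by
  classical
  obtain ⟨i, hin, hi⟩ := hitTime_le_natCast_iff.mp hle
  have h : ∃ k, ω k = y := ⟨i, hi⟩
  have hfind : Nat.find h ≤ n := (Nat.find_min' h hi).trans hin
  have hspec : ω' (Nat.find h) = y := hagree _ hfind ▸ Nat.find_spec h
  rw [hitTime_eq_find h, hitTime_eq_find ⟨_, hspec⟩, Nat.cast_inj, Nat.find_eq_iff]
  exact ⟨hspec, fun j hj => hagree j (hj.le.trans hfind) ▸ Nat.find_min h hj⟩

lemma hitTime_eq_add_hitTime_pathShift (h : ∀ i < m, ω i ≠ y) :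
    hitTime y ω = m + hitTime y (pathShift m ω) := by
  refine le_antisymm ?_ (le_iInf₂ fun n (hn : ω n = y) => ?_)
  · change hitTime y ω ≤ m + ⨅ k ∈ {k | ω (m + k) = y}, (k : ℝ≥0∞)
    simp only [Set.mem_ofPred_eq, ENNReal.add_iInf]
    exact le_iInf₂ fun k hk => (hitTime_le_of_eq hk).trans_eq (by push_cast; rfl)
  · obtain ⟨k, rfl⟩ := Nat.exists_eq_add_of_le (not_lt.mp fun hn' => h n hn' hn)
    calc (m : ℝ≥0∞) + hitTime y (pathShift m ω) ≤ m + k := by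
          gcongr; exact hitTime_le_of_eq hn
      _ = ((m + k : ℕ) : ℝ≥0∞) := by push_cast; rfl

lemma covTime_eq_covTimeOn_univ [Fintype V] (ω : ℕ → V) :
    covTime ω = covTimeOn Finset.univ ω := by
  simp [covTime, covTimeOn, Finset.sup_univ_eq_iSup]

lemma covTimeOn_eq_hitTime_sup [DecidableEq V] (hy : y ∈ S) :
    covTimeOn S ω = hitTime y ω ⊔ covTimeOn (S.erase y) ω := by
  conv_lhs => rw [covTimeOn, ← Finset.insert_erase hy, Finset.sup_insert]
  rfl

lemma exists_covTimeOn_eq_natCast (h : covTimeOn S ω ≠ ⊤) : ∃ n : ℕ, covTimeOn S ω = n := by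
  rcases S.eq_empty_or_nonempty with rfl | hS
  · exact ⟨0, by simp [covTimeOn]⟩
  obtain ⟨y, -, hy⟩ := Finset.exists_mem_eq_sup S hS fun y => hitTime y ω
  rw [covTimeOn, hy] at h ⊢
  exact exists_hitTime_eq_natCast h

lemma covTimeOn_eq_of_agree (hagree : ∀ i ≤ n, ω i = ω' i) (hle : covTimeOn S ω ≤ n) :
    covTimeOn S ω' = covTimeOn S ω :=
  Finset.sup_congr rfl fun _ hy => hitTime_eq_of_agree hagree ((Finset.le_sup hy).trans hle)

lemma preimage_comp_pathCylinder {σ : V → V} (hσ : σ.Injective) (n : ℕ)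
    (s : ℕ → V) : (σ ∘ ·) ⁻¹' pathCylinder n (σ ∘ s) = pathCylinder n s := by
  ext ω
  simp [pathCylinder, hσ.eq_iff]

lemma pathCylinder_eq_preimage_restrict (n : ℕ) (s : ℕ → V) :
    pathCylinder n s
      = (Finset.Iic n).restrict (π := fun _ => V) ⁻¹' {(Finset.Iic n).restrict s} := by
  ext ω
  simp [pathCylinder, funext_iff]

def visitsLast [DecidableEq V] (S : Finset V) (u : V) : Set (ℕ → V) :=
  {ω | covTimeOn (S.erase u) ω < hitTime u ω}

end Paths

section Measurability

variable {V : Type*} [MeasurableSpace V]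

lemma measurable_pathShift (m : ℕ) : Measurable (pathShift m : (ℕ → V) → ℕ → V) :=
  measurable_pi_lambda _ fun k => measurable_pi_apply (m + k)

variable [MeasurableSingletonClass V]

lemma measurable_hitTime (y : V) : Measurable (hitTime y : (ℕ → V) → ℝ≥0∞) := by
  classical
  have : hitTime y = fun ω : ℕ → V => ⨅ n : ℕ, if ω n = y then (n : ℝ≥0∞) else ⊤ :=
    funext fun ω => iInf_congr fun n => iInf_eq_if _
  rw [this]
  exact .iInf fun n => .ite (measurableSet_singleton y |>.preimage (measurable_pi_apply n))
    measurable_const measurable_const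

lemma measurable_covTimeOn (S : Finset V) : Measurable (covTimeOn S : (ℕ → V) → ℝ≥0∞) := by
  have : covTimeOn S = S.sup hitTime := funext fun ω => (Finset.sup_apply S hitTime ω).symm
  rw [this]
  exact Finset.sup_induction measurable_const (fun _ hf _ hg => hf.sup hg)
    fun y _ => measurable_hitTime y

lemma measurableSet_pathCylinder (n : ℕ) (s : ℕ → V) : MeasurableSet (pathCylinder n s) := by
  simp only [pathCylinder, Set.ofPred_forall]
  measurability

lemma sum_measure_visitsLast_le [DecidableEq V] (μ : Measure (ℕ → V)) (S : Finset V) :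
    ∑ u ∈ S, μ (visitsLast S u) ≤ μ Set.univ := by
  have hdisj : (S : Set V).PairwiseDisjoint (visitsLast S) := by
    intro u hu w hw huw
    refine Set.disjoint_left.mpr fun ω hωu hωw => ?_
    have hωu : covTimeOn (S.erase u) ω < hitTime u ω := hωu
    have hωw : covTimeOn (S.erase w) ω < hitTime w ω := hωw
    have hw_le : hitTime w ω ≤ covTimeOn (S.erase u) ω :=
      Finset.le_sup (f := (hitTime · ω)) (Finset.mem_erase.mpr ⟨huw.symm, hw⟩)
    have hu_le : hitTime u ω ≤ covTimeOn (S.erase w) ω :=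
      Finset.le_sup (f := (hitTime · ω)) (Finset.mem_erase.mpr ⟨huw, hu⟩)
    exact (hw_le.trans_lt hωu).not_ge (hu_le.trans hωw.le)
  rw [← measure_biUnion_finset hdisj fun u _ =>
    measurableSet_lt (measurable_covTimeOn _) (measurable_hitTime u)]
  exact measure_mono (Set.subset_univ _)

end Measurability

lemma MeasureTheory.measure_preimage_le_of_le_invariants {α : Type*} [MeasurableSpace α]
    {f : α → α} (hf : ‹MeasurableSpace α› ≤ MeasurableSpace.invariants f) (μ : Measure α)
    (t : Set α) : μ (f ⁻¹' t) ≤ μ t :=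
  calc μ (f ⁻¹' t) ≤ μ (f ⁻¹' toMeasurable μ t) :=
        measure_mono (Set.preimage_mono (subset_toMeasurable μ t))
    _ = μ t := by rw [(hf _ (measurableSet_toMeasurable μ t)).2, measure_toMeasurable]

lemma MeasurableSpace.pi_le_invariants_comp {ι V : Type*} [MeasurableSpace V] {σ : V → V}
    (hσ : ‹MeasurableSpace V› ≤ invariants σ) :
    (pi : MeasurableSpace (ι → V)) ≤ invariants (σ ∘ ·) :=
  iSup_le fun i => ((measurable_invariants_of_semiconj (measurable_pi_apply i)
    fun _ => rfl).mono le_rfl hσ).comap_le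

lemma MeasureTheory.Measure.ext_of_pathCylinder {V : Type*} [Finite V] [MeasurableSpace V]
    [MeasurableSingletonClass V] {μ ν : Measure (ℕ → V)} [IsFiniteMeasure μ]
    (h : ∀ n s, μ (pathCylinder n s) = ν (pathCylinder n s)) : μ = ν := by
  have hcyl : ∀ t ∈ measurableCylinders fun _ : ℕ => V, μ t = ν t := by
    intro t ht
    simp only [measurableCylinders_nat, Set.mem_iUnion, Set.mem_singleton_iff] at ht
    obtain ⟨n, S, -, rfl⟩ := ht
    have hfiber : ∀ v, MeasurableSet ((Finset.Iic n).restrict ⁻¹' {v} : Set (ℕ → V)) :=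
      fun v => Finset.measurable_restrict _ (measurableSet_singleton v)
    rw [cylinder, ← S.toFinite.coe_toFinset,
      ← sum_measure_preimage_singleton _ fun v _ => hfiber v,
      ← sum_measure_preimage_singleton _ fun v _ => hfiber v]
    refine Finset.sum_congr rfl fun v _ => ?_
    rcases ((Finset.Iic n).restrict ⁻¹' {v} : Set (ℕ → V)).eq_empty_or_nonempty
      with he | ⟨ω, rfl⟩
    · rw [he, measure_empty, measure_empty]
    · rw [← pathCylinder_eq_preimage_restrict, h]
  exact ext_of_generate_finite _ generateFrom_measurableCylinders.symm
    isPiSystem_measurableCylinders hcyl (hcyl _ (univ_mem_measurableCylinders _))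

lemma sum_range_inv_add_one_le_ofReal_log (n : ℕ) :
    ∑ j ∈ Finset.range n, ((j : ℝ≥0∞) + 1)⁻¹ ≤ ENNReal.ofReal (Real.log n + 1) := by
  have hsum : ∑ j ∈ Finset.range n, ((j : ℝ≥0∞) + 1)⁻¹ = ENNReal.ofReal (harmonic n) := by
    rw [harmonic, Rat.cast_sum, ENNReal.ofReal_sum_of_nonneg fun j _ => by positivity]
    refine Finset.sum_congr rfl fun j _ => ?_
    rw [Rat.cast_inv, ENNReal.ofReal_inv_of_pos (by positivity), Rat.cast_natCast, Nat.cast_succ,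
      ENNReal.ofReal_add (by positivity) zero_le_one, ENNReal.ofReal_natCast, ENNReal.ofReal_one]
  rw [hsum]
  exact ENNReal.ofReal_le_ofReal (by linarith [harmonic_le_one_add_log n])

namespace IsChainLaw

variable {V : Type*} [Fintype V] [MeasurableSpace V] {p : V → V → ℝ} {P : V → Measure (ℕ → V)}

open scoped Classical in
lemma measure_pathCylinder (hP : IsChainLaw p P) (x : V) (n : ℕ) (s : ℕ → V) :
    P x (pathCylinder n s) = (if s 0 = x then 1 else 0) *
      ∏ i ∈ Finset.range n, ENNReal.ofReal (p (s i) (s (i + 1))) :=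
  hP.2 x n s

lemma separatesPoints (hP : IsChainLaw p P) (hrow : ∀ x, ∑ y, p x y = 1) :
    MeasurableSpace.SeparatesPoints V := by
  classical
  refine MeasurableSpace.separatesPoints_iff.mpr fun a b hab => by_contra fun hne => ?_
  set σ := Equiv.swap a b
  have hσ : ‹MeasurableSpace V› ≤ MeasurableSpace.invariants σ := fun A hA => ⟨hA, by
    ext z
    simp only [Set.mem_preimage, σ, Equiv.swap_apply_def]
    split_ifs with hza hzb
    · rw [hza, hab A hA]
    · rw [hzb, hab A hA]
    · rfl⟩
  have hnonpos : ∀ z, p a z ≤ 0 := fun z => by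
    have hle := measure_preimage_le_of_le_invariants (MeasurableSpace.pi_le_invariants_comp hσ)
      (P a) (pathCylinder 1 (σ ∘ fun i => if i = 0 then a else z))
    rw [preimage_comp_pathCylinder σ.injective] at hle
    simpa [hP.measure_pathCylinder, σ, Ne.symm hne] using hle
  have := Finset.sum_nonpos fun z (_ : z ∈ Finset.univ) => hnonpos z
  linarith [hrow a]

variable [MeasurableSingletonClass V]

lemma map_pathShift_restrict_pathCylinder (hP : IsChainLaw p P)
    (x : V) (m : ℕ) (s : ℕ → V) :
    ((P x).restrict (pathCylinder m s)).map (pathShift m) = P x (pathCylinder m s) • P (s m) := by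
  have := hP.1 x
  refine Measure.ext_of_pathCylinder fun k t => ?_
  rw [Measure.map_apply (measurable_pathShift m) (measurableSet_pathCylinder k t),
    Measure.restrict_apply (measurable_pathShift m (measurableSet_pathCylinder k t)),
    Measure.smul_apply, smul_eq_mul]
  by_cases hts : t 0 = s m
  · have hprefix : ∀ i ∈ Finset.range m, ENNReal.ofReal (p (pathAppend m s t i)
        (pathAppend m s t (i + 1))) = ENNReal.ofReal (p (s i) (s (i + 1))) := fun i hi => by
      rw [Finset.mem_range] at hi
      rw [pathAppend_of_le hts hi.le, pathAppend_of_le hts hi]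
    rw [preimage_pathShift_inter_pathCylinder hts, hP.measure_pathCylinder, Finset.prod_range_add,
      Finset.prod_congr rfl hprefix, hP.measure_pathCylinder, hP.measure_pathCylinder,
      pathAppend_of_le hts m.zero_le, if_pos hts]
    simp only [add_assoc, pathAppend_add, one_mul, mul_assoc]
  · have hempty : pathShift m ⁻¹' pathCylinder k t ∩ pathCylinder m s = ∅ :=
      Set.eq_empty_of_forall_notMem fun ω ⟨hshift, hinit⟩ =>
        hts ((hshift 0 k.zero_le).symm.trans (hinit m le_rfl))
    rw [hempty, hP.measure_pathCylinder (s m), if_neg hts, measure_empty]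
    simp

lemma setLIntegral_comp_pathShift_le (hP : IsChainLaw p P) {n : ℕ} {A : Set (ℕ → V)}
    (hA : ∀ ω ω', (∀ i ≤ n, ω i = ω' i) → ω ∈ A → ω' ∈ A) {f : (ℕ → V) → ℝ≥0∞}
    (hf : Measurable f) {c : ℝ≥0∞} (hc : ∀ y, ∫⁻ ω, f ω ∂P y ≤ c) (x : V) :
    ∫⁻ ω in A, f (pathShift n ω) ∂P x ≤ c * P x A := by
  set r := (Finset.Iic n).restrict (π := fun _ : ℕ => V)
  set B : (Finset.Iic n → V) → Set (ℕ → V) := fun v => A ∩ r ⁻¹' {v}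
  have hpiece : ∀ v, B v = ∅ ∨ ∃ ω₀, B v = pathCylinder n ω₀ := by
    intro v
    rcases (B v).eq_empty_or_nonempty with h | ⟨ω₀, hω₀A, rfl⟩
    · exact .inl h
    · refine .inr ⟨ω₀, ?_⟩
      change A ∩ r ⁻¹' {r ω₀} = _
      rw [← pathCylinder_eq_preimage_restrict]
      exact Set.inter_eq_right.mpr fun ω hω => hA ω₀ ω (fun i hi => (hω i hi).symm) hω₀A
  have hB : ∀ v, MeasurableSet (B v) := fun v => by
    rcases hpiece v with h | ⟨ω₀, h⟩ <;> rw [h]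
    exacts [.empty, measurableSet_pathCylinder n ω₀]
  have hdisj : Pairwise (Function.onFun Disjoint B) := fun v w hvw =>
    ((Set.disjoint_singleton.mpr hvw).preimage r).mono Set.inter_subset_right
      Set.inter_subset_right
  have hAB : A = ⋃ v, B v := by
    ext ω
    simp [B]
  have hpiece_le : ∀ v, ∫⁻ ω in B v, f (pathShift n ω) ∂P x ≤ c * P x (B v) := by
    intro v
    rcases hpiece v with h | ⟨ω₀, h⟩
    · simp [h]
    rw [h, ← lintegral_map hf (measurable_pathShift n), hP.map_pathShift_restrict_pathCylinder,
      lintegral_smul_measure, smul_eq_mul, mul_comm]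
    exact mul_le_mul_left (hc _) _
  calc ∫⁻ ω in A, f (pathShift n ω) ∂P x = ∑' v, ∫⁻ ω in B v, f (pathShift n ω) ∂P x := by
        rw [hAB, lintegral_iUnion hB hdisj]
    _ ≤ ∑' v, c * P x (B v) := ENNReal.tsum_le_tsum hpiece_le
    _ = c * P x A := by rw [ENNReal.tsum_mul_left, ← measure_iUnion hdisj hB, ← hAB]

lemma lintegral_hitTime_sub_covTimeOn_le (hP : IsChainLaw p P) (x u : V) (S : Finset V) :
    ∫⁻ ω, (hitTime u ω - covTimeOn S ω) ∂P x
      ≤ tHit P * P x {ω | covTimeOn S ω < hitTime u ω} := by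
  set A : ℕ → Set (ℕ → V) := fun n => {ω | covTimeOn S ω = n ∧ (n : ℝ≥0∞) < hitTime u ω}
  have hA : ∀ n, MeasurableSet (A n) := fun n =>
    (measurable_covTimeOn S (measurableSet_singleton _)).inter
      (measurableSet_lt measurable_const (measurable_hitTime u))
  have hdisj : Pairwise (Function.onFun Disjoint A) := fun n n' hnn' =>
    Set.disjoint_left.mpr fun ω h h' => hnn' (Nat.cast_injective (h.1.symm.trans h'.1))
  have hunion : {ω | covTimeOn S ω < hitTime u ω} = ⋃ n, A n := by
    ext ω
    simp only [Set.mem_ofPred_eq, Set.mem_iUnion, A]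
    constructor
    · intro hlt
      obtain ⟨n, hn⟩ := exists_covTimeOn_eq_natCast hlt.ne_top
      exact ⟨n, hn, hn ▸ hlt⟩
    · rintro ⟨n, hn, hlt⟩
      exact hn ▸ hlt
  have hsupp : Function.support (fun ω => hitTime u ω - covTimeOn S ω)
      ⊆ {ω | covTimeOn S ω < hitTime u ω} := fun ω hω =>
    tsub_pos_iff_lt.mp (pos_iff_ne_zero.mpr hω)
  have hshift : ∀ n, ∀ ω ∈ A n, hitTime u ω - covTimeOn S ω = hitTime u (pathShift n ω) := by
    rintro n ω ⟨hC, hlt⟩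
    rw [hC, hitTime_eq_add_hitTime_pathShift fun i hi => natCast_lt_hitTime_iff.mp hlt i hi.le,
      ENNReal.add_sub_cancel_left (natCast_ne_top n)]
  have hdet : ∀ n ω ω', (∀ i ≤ n, ω i = ω' i) → ω ∈ A n → ω' ∈ A n := by
    rintro n ω ω' hagree ⟨hC, hlt⟩
    refine ⟨(covTimeOn_eq_of_agree hagree hC.le).trans hC,
      natCast_lt_hitTime_iff.mpr fun i hi => ?_⟩
    rw [← hagree i hi]
    exact natCast_lt_hitTime_iff.mp hlt i hi
  have hhit : ∀ y, ∫⁻ ω, hitTime u ω ∂P y ≤ tHit P := fun y =>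
    le_iSup₂ (f := fun y u => eHit P y u) y u
  calc ∫⁻ ω, (hitTime u ω - covTimeOn S ω) ∂P x
      = ∑' n, ∫⁻ ω in A n, (hitTime u ω - covTimeOn S ω) ∂P x := by
        rw [← setLIntegral_eq_of_support_subset hsupp, hunion, lintegral_iUnion hA hdisj]
    _ = ∑' n, ∫⁻ ω in A n, hitTime u (pathShift n ω) ∂P x :=
        tsum_congr fun n => setLIntegral_congr_fun (hA n) (hshift n)
    _ ≤ ∑' n, tHit P * P x (A n) := ENNReal.tsum_le_tsum fun n =>
        hP.setLIntegral_comp_pathShift_le (hdet n) (measurable_hitTime u) hhit x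
    _ = tHit P * P x {ω | covTimeOn S ω < hitTime u ω} := by
        rw [ENNReal.tsum_mul_left, hunion, measure_iUnion hdisj hA]

lemma lintegral_covTimeOn_le_add [DecidableEq V] (hP : IsChainLaw p P) (x : V) {S : Finset V}
    {u : V} (hu : u ∈ S) :
    ∫⁻ ω, covTimeOn S ω ∂P x
      ≤ ∫⁻ ω, covTimeOn (S.erase u) ω ∂P x + tHit P * P x (visitsLast S u) :=
  calc ∫⁻ ω, covTimeOn S ω ∂P x
      ≤ ∫⁻ ω, covTimeOn (S.erase u) ω + (hitTime u ω - covTimeOn (S.erase u) ω) ∂P x :=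
        lintegral_mono fun ω => by
          rw [covTimeOn_eq_hitTime_sup hu]
          exact sup_le le_add_tsub le_self_add
    _ = ∫⁻ ω, covTimeOn (S.erase u) ω ∂P x
          + ∫⁻ ω, (hitTime u ω - covTimeOn (S.erase u) ω) ∂P x :=
        lintegral_add_left (measurable_covTimeOn _) _
    _ ≤ _ := add_le_add_right (hP.lintegral_hitTime_sub_covTimeOn_le x u _) _

lemma lintegral_covTimeOn_le [DecidableEq V] (hP : IsChainLaw p P) (x : V) (S : Finset V) :
    ∫⁻ ω, covTimeOn S ω ∂P x ≤ (∑ j ∈ Finset.range S.card, ((j : ℝ≥0∞) + 1)⁻¹) * tHit P := by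
  obtain ⟨k, hk⟩ : ∃ k, S.card = k := ⟨_, rfl⟩
  rw [hk]
  induction k generalizing S with
  | zero => simp [Finset.card_eq_zero.mp hk, covTimeOn]
  | succ k ih =>
    have := hP.1 x
    set H := (∑ j ∈ Finset.range k, ((j : ℝ≥0∞) + 1)⁻¹) * tHit P
    have hstep : ∀ u ∈ S, ∫⁻ ω, covTimeOn S ω ∂P x ≤ H + tHit P * P x (visitsLast S u) :=
      fun u hu => (hP.lintegral_covTimeOn_le_add x hu).trans <| add_le_add_left
        (ih _ (by rw [Finset.card_erase_of_mem hu, hk, Nat.add_sub_cancel])) _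
    have havg : ((k : ℝ≥0∞) + 1) * ∫⁻ ω, covTimeOn S ω ∂P x ≤ (k + 1) * H + tHit P :=
      calc ((k : ℝ≥0∞) + 1) * ∫⁻ ω, covTimeOn S ω ∂P x
          = ∑ u ∈ S, ∫⁻ ω, covTimeOn S ω ∂P x := by
            rw [Finset.sum_const, nsmul_eq_mul, hk, Nat.cast_succ]
        _ ≤ ∑ u ∈ S, (H + tHit P * P x (visitsLast S u)) := Finset.sum_le_sum hstep
        _ = (k + 1) * H + tHit P * ∑ u ∈ S, P x (visitsLast S u) := by
            rw [Finset.sum_add_distrib, Finset.sum_const, nsmul_eq_mul, hk, Nat.cast_succ,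
              Finset.mul_sum]
        _ ≤ (k + 1) * H + tHit P * 1 := by
            gcongr
            exact (sum_measure_visitsLast_le _ S).trans_eq measure_univ
        _ = (k + 1) * H + tHit P := by rw [mul_one]
    have hk0 : (k : ℝ≥0∞) + 1 ≠ 0 := by positivity
    have hktop : (k : ℝ≥0∞) + 1 ≠ ⊤ := by finiteness
    rw [← ENNReal.mul_le_mul_iff_right hk0 hktop]
    refine havg.trans_eq ?_
    rw [Finset.sum_range_succ, add_mul _ _ (tHit P), mul_add, ← mul_assoc _ (_ + 1)⁻¹,
      ENNReal.mul_inv_cancel hk0 hktop, one_mul]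

end IsChainLaw

theorem statement1_general {V : Type*} [Fintype V] [MeasurableSpace V]
    (p : Matrix V V ℝ)
    (hrow : ∀ x, ∑ y : V, p x y = 1)
    (P : V → Measure (ℕ → V))
    (hP : IsChainLaw (fun x y => p x y) P) :
    tCov P ≤ ENNReal.ofReal (Real.log (Fintype.card V) + 1) * tHit P := by
  classical
  have := hP.separatesPoints hrow
  refine iSup_le fun x => ?_
  calc ∫⁻ ω, covTime ω ∂P x = ∫⁻ ω, covTimeOn Finset.univ ω ∂P x := by
        simp_rw [covTime_eq_covTimeOn_univ]
    _ ≤ (∑ j ∈ Finset.range (Fintype.card V), ((j : ℝ≥0∞) + 1)⁻¹) * tHit P :=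
        hP.lintegral_covTimeOn_le x Finset.univ
    _ ≤ ENNReal.ofReal (Real.log (Fintype.card V) + 1) * tHit P := by
        gcongr
        exact sum_range_inv_add_one_le_ofReal_log _

/-- Matthews bound -/
theorem statement1 {V : Type*} [Fintype V] [DecidableEq V] [MeasurableSpace V] [Nonempty V]
    (p : Matrix V V ℝ)
    (hnn : ∀ x y, 0 ≤ p x y) (hrow : ∀ x, ∑ y : V, p x y = 1)
    (hirr : ∀ x y : V, ∃ n : ℕ, 0 < (p ^ n) x y)
    (P : V → Measure (ℕ → V))
    (hP : IsChainLaw (fun x y => p x y) P) :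
    tCov P ≤ ENNReal.ofReal (Real.log (Fintype.card V) + 1) * tHit P :=
  statement1_general p hrow P hP
end

section
/- (Commute time identity) For a finite connected weighted graph G with total weight μ(G) = Σ_{x,y} μ_{xy}, for all vertices x, y: E^x(τ_y) + E^y(τ_x) = μ(G) · R_eff(x, y), where R_eff is the effective resistance. -/
/-!
The mean hitting time `h_y z = E^z τ_y = ∑ₙ P^z(τ_y > n)` is finite on a connected graph and
satisfies `h_y z = 1 + ∑_w p(z,w) h_y w` for `z ≠ y`; that is, its weighted Laplacian equals the
degree `μ_z` away from `y`. Hence `f = h_y - h_x` is harmonic off `{x, y}`, and since the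
Laplacian sums to zero, the Laplacian of `f` at `x` is `μ(G)`. Rescaled to equal `1` at `x` and `0` at `y`, `f` minimises
the energy (Dirichlet principle), and Green's identity gives `μ(G) / (h_y x + h_x y)` for that
minimum, which is `R_eff(x, y)⁻¹`.

The σ-algebra on `V` is arbitrary, so the event "the walk avoids `y` up to time `n`" need not be
measurable. It is null-measurable, though, because the cylinder probabilities of the event and of
its complement add up to `1`.
-/

open Finset MeasureTheory
open scoped ENNReal Classical

lemma MeasureTheory.nullMeasurableSet_of_measure_add_measure_compl_le {α : Type*}
    [MeasurableSpace α] {ν : Measure α} [IsFiniteMeasure ν] {s : Set α}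
    (h : ν s + ν sᶜ ≤ ν Set.univ) : NullMeasurableSet s ν := by
  set t := toMeasurable ν s
  set t' := toMeasurable ν sᶜ
  have hunion : t ∪ t' = Set.univ := Set.eq_univ_of_forall fun ω =>
    (em (ω ∈ s)).imp (subset_toMeasurable ν s ·) (subset_toMeasurable ν sᶜ ·)
  have hinter : ν (t ∩ t') = 0 := by
    have hadd := measure_union_add_inter (μ := ν) t (measurableSet_toMeasurable ν sᶜ)
    rw [hunion, measure_toMeasurable, measure_toMeasurable] at hadd
    refine nonpos_iff_eq_zero.1 <| ENNReal.le_of_add_le_add_left (measure_ne_top ν Set.univ) ?_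
    rw [hadd, add_zero]
    exact h
  have hae : t =ᵐ[ν] s := ae_eq_set.2
    ⟨measure_mono_null (show t \ s ⊆ t ∩ t' from fun ω hω =>
      ⟨hω.1, subset_toMeasurable ν sᶜ hω.2⟩) hinter,
      by rw [Set.sdiff_eq_empty.2 (subset_toMeasurable ν s), measure_empty]⟩
  exact (measurableSet_toMeasurable ν s).nullMeasurableSet.congr hae

lemma summable_pow_div {c : ℝ} (hc0 : 0 ≤ c) (hc1 : c < 1) (k : ℕ) [NeZero k] :
    Summable fun n : ℕ => c ^ (n / k) := by
  rw [← (Nat.divModEquiv k).symm.summable_iff]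
  have hprod := (summable_geometric_of_lt_one hc0 hc1).mul_of_nonneg
    (Summable.of_finite (f := fun _ : Fin k => (1 : ℝ))) (fun j => pow_nonneg hc0 j)
    (fun _ => zero_le_one)
  convert hprod using 2 with jr
  rw [Function.comp_apply, Nat.divModEquiv_symm_apply, mul_one, add_comm,
    Nat.add_mul_div_right _ _ (NeZero.pos k), Nat.div_eq_of_lt jr.2.isLt, zero_add]

noncomputable section

section Survival

variable {V : Type*} [Fintype V] {p : V → V → ℝ} {A : Set V}

/-- `survivalProb p A n z` is the probability that the chain started at `z` avoids `A` at the
times `0, …, n`. -/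
def survivalProb (p : V → V → ℝ) (A : Set V) : ℕ → V → ℝ
  | 0 => Aᶜ.indicator 1
  | n + 1 => Aᶜ.indicator fun z => ∑ w, p z w * survivalProb p A n w

lemma survivalProb_zero : survivalProb p A 0 = Aᶜ.indicator 1 := rfl

lemma survivalProb_of_mem (n : ℕ) {z : V} (hz : z ∈ A) : survivalProb p A n z = 0 := by
  cases n <;> simp [survivalProb, hz]

lemma survivalProb_of_notMem_succ (n : ℕ) {z : V} (hz : z ∉ A) :
    survivalProb p A (n + 1) z = ∑ w, p z w * survivalProb p A n w := by
  simp [survivalProb, hz]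

lemma survivalProb_nonneg (hp : p ∈ Matrix.rowStochastic ℝ V) (n : ℕ) (z : V) :
    0 ≤ survivalProb p A n z := by
  induction n generalizing z with
  | zero => exact Set.indicator_nonneg (fun _ _ => zero_le_one' ℝ) z
  | succ n ih =>
    exact Set.indicator_nonneg (fun z _ => sum_nonneg fun w _ =>
      mul_nonneg (Matrix.nonneg_of_mem_rowStochastic hp) (ih w)) z

lemma survivalProb_le_one (hp : p ∈ Matrix.rowStochastic ℝ V) (n : ℕ) (z : V) :
    survivalProb p A n z ≤ 1 := by
  induction n generalizing z with
  | zero => exact Set.indicator_le_self' (fun _ _ => zero_le_one' ℝ) z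
  | succ n ih =>
    by_cases hz : z ∈ A
    · simp [survivalProb_of_mem _ hz]
    rw [survivalProb_of_notMem_succ n hz]
    calc ∑ w, p z w * survivalProb p A n w ≤ ∑ w, p z w :=
          sum_le_sum fun w _ =>
            mul_le_of_le_one_right (Matrix.nonneg_of_mem_rowStochastic hp) (ih w)
      _ = 1 := Matrix.sum_row_of_mem_rowStochastic hp z

lemma survivalProb_empty (hp : p ∈ Matrix.rowStochastic ℝ V) (n : ℕ) (z : V) :
    survivalProb p ∅ n z = 1 := by
  induction n generalizing z with
  | zero => simp [survivalProb_zero]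
  | succ n ih =>
    simp [survivalProb_of_notMem_succ n (Set.notMem_empty z), ih,
      Matrix.sum_row_of_mem_rowStochastic hp z]

lemma survivalProb_add_le (hp : p ∈ Matrix.rowStochastic ℝ V) {k : ℕ} {c : ℝ}
    (hc : ∀ w, survivalProb p A k w ≤ c) (n : ℕ) (z : V) :
    survivalProb p A (n + k) z ≤ c * survivalProb p A n z := by
  by_cases hz : z ∈ A
  · simp [survivalProb_of_mem _ hz]
  induction n generalizing z with
  | zero => simpa [survivalProb_zero, hz] using hc z
  | succ n ih =>
    rw [Nat.add_right_comm, survivalProb_of_notMem_succ _ hz, survivalProb_of_notMem_succ _ hz,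
      mul_sum]
    refine sum_le_sum fun w _ => ?_
    by_cases hw : w ∈ A
    · simp [survivalProb_of_mem _ hw]
    calc p z w * survivalProb p A (n + k) w ≤ p z w * (c * survivalProb p A n w) :=
          mul_le_mul_of_nonneg_left (ih w hw) (Matrix.nonneg_of_mem_rowStochastic hp)
      _ = c * (p z w * survivalProb p A n w) := by ring

lemma survivalProb_antitone (hp : p ∈ Matrix.rowStochastic ℝ V) (z : V) :
    Antitone fun n => survivalProb p A n z :=
  antitone_nat_of_succ_le fun n => by
    simpa using survivalProb_add_le hp (k := 1) (survivalProb_le_one hp 1) n z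

lemma survivalProb_le_pow_div (hp : p ∈ Matrix.rowStochastic ℝ V) {k : ℕ} {c : ℝ} (hc0 : 0 ≤ c)
    (hc : ∀ w, survivalProb p A k w ≤ c) (n : ℕ) (z : V) :
    survivalProb p A n z ≤ c ^ (n / k) := by
  have hmul : ∀ j z, survivalProb p A (j * k) z ≤ c ^ j := by
    intro j
    induction j with
    | zero => simpa using survivalProb_le_one hp 0
    | succ j ih =>
      intro z
      calc survivalProb p A ((j + 1) * k) z ≤ c * survivalProb p A (j * k) z := by
            rw [Nat.succ_mul]; exact survivalProb_add_le hp hc _ z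
        _ ≤ c * c ^ j := mul_le_mul_of_nonneg_left (ih z) hc0
        _ = c ^ (j + 1) := (pow_succ' c j).symm
  exact (survivalProb_antitone hp z (Nat.div_mul_le_self n k)).trans (hmul _ z)

lemma survivalProb_length_lt_one (hp : p ∈ Matrix.rowStochastic ℝ V) {G : SimpleGraph V}
    (hG : ∀ z w, G.Adj z w → 0 < p z w) {z y : V} (hy : y ∈ A) (q : G.Walk z y) :
    survivalProb p A q.length z < 1 := by
  induction q with
  | nil => simp [survivalProb_of_mem _ hy]
  | @cons a b _ hab q ih =>
    by_cases ha : a ∈ A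
    · simp [survivalProb_of_mem _ ha]
    rw [SimpleGraph.Walk.length_cons, survivalProb_of_notMem_succ _ ha,
      ← Matrix.sum_row_of_mem_rowStochastic hp a]
    refine sum_lt_sum (fun w _ => mul_le_of_le_one_right (Matrix.nonneg_of_mem_rowStochastic hp)
      (survivalProb_le_one hp _ w)) ⟨b, mem_univ b, mul_lt_of_lt_one_right (hG a b hab) (ih hy)⟩

lemma summable_survivalProb (hp : p ∈ Matrix.rowStochastic ℝ V) {G : SimpleGraph V}
    (hG : ∀ z w, G.Adj z w → 0 < p z w) (hconn : G.Connected) (hA : A.Nonempty) (z : V) :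
    Summable fun n => survivalProb p A n z := by
  -- Past the longest of the walks from each vertex into `A`, the survival probabilities are
  -- uniformly below some `c < 1`, and submultiplicativity turns this into geometric decay.
  obtain ⟨y, hy⟩ := hA
  have hlt : ∀ z, ∃ n, survivalProb p A n z < 1 := fun z =>
    ⟨_, survivalProb_length_lt_one hp hG hy (hconn.preconnected z y).some⟩
  choose m hm using hlt
  have : Nonempty V := ⟨y⟩
  obtain ⟨z₁, hz₁⟩ := Finite.exists_max m
  obtain ⟨z₂, hz₂⟩ := Finite.exists_max (survivalProb p A (m z₁ + 1))
  have hc1 : survivalProb p A (m z₁ + 1) z₂ < 1 :=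
    (survivalProb_antitone hp z₂ ((hz₁ z₂).trans (Nat.le_succ _))).trans_lt (hm z₂)
  exact (summable_pow_div (survivalProb_nonneg hp _ z₂) hc1 _).of_nonneg_of_le
    (fun n => survivalProb_nonneg hp n z)
    (survivalProb_le_pow_div hp (survivalProb_nonneg hp _ z₂) hz₂ · z)

def meanHittingTime (p : V → V → ℝ) (A : Set V) (z : V) : ℝ := ∑' n, survivalProb p A n z

lemma meanHittingTime_of_mem {z : V} (hz : z ∈ A) : meanHittingTime p A z = 0 := by
  simp [meanHittingTime, survivalProb_of_mem _ hz]

lemma meanHittingTime_nonneg (hp : p ∈ Matrix.rowStochastic ℝ V) (A : Set V) (z : V) :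
    0 ≤ meanHittingTime p A z :=
  tsum_nonneg fun n => survivalProb_nonneg hp n z

lemma meanHittingTime_of_notMem (hsum : ∀ w, Summable fun n => survivalProb p A n w) {z : V}
    (hz : z ∉ A) : meanHittingTime p A z = 1 + ∑ w, p z w * meanHittingTime p A w := by
  rw [meanHittingTime, (hsum z).tsum_eq_zero_add]
  simp only [survivalProb_zero, Set.indicator_of_mem (Set.mem_compl hz), Pi.one_apply,
    survivalProb_of_notMem_succ _ hz, meanHittingTime, ← tsum_mul_left]
  rw [Summable.tsum_finsetSum fun w _ => (hsum w).mul_left _]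

lemma one_le_meanHittingTime (hp : p ∈ Matrix.rowStochastic ℝ V)
    (hsum : ∀ w, Summable fun n => survivalProb p A n w) {z : V} (hz : z ∉ A) :
    1 ≤ meanHittingTime p A z := by
  rw [meanHittingTime_of_notMem hsum hz, le_add_iff_nonneg_right]
  exact sum_nonneg fun w _ =>
    mul_nonneg (Matrix.nonneg_of_mem_rowStochastic hp) (meanHittingTime_nonneg hp A w)

end Survival

section PathSpace

variable {V : Type*} {p : V → V → ℝ}

def pathWeight (p : V → V → ℝ) {n : ℕ} (s : Fin (n + 1) → V) : ℝ :=
  ∏ i : Fin n, p (s i.castSucc) (s i.succ)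

lemma pathWeight_cons {n : ℕ} (a : V) (t : Fin (n + 1) → V) :
    pathWeight p (Fin.cons a t : Fin (n + 2) → V) = p a (t 0) * pathWeight p t := by
  simp only [pathWeight, Fin.prod_univ_succ, ← Fin.succ_castSucc, Fin.cons_succ,
    Fin.castSucc_zero, Fin.cons_zero]

def pathPrefix (n : ℕ) (ω : ℕ → V) : Fin (n + 1) → V := fun i => ω i

lemma hitTime_eq_tsum (y : V) (ω : ℕ → V) :
    hitTime y ω = ∑' n, {ω | ∀ i, pathPrefix n ω i ≠ y}.indicator 1 ω := by
  by_cases h : ∃ m, ω m = y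
  · have hfind : hitTime y ω = Nat.find h := le_antisymm (iInf₂_le (Nat.find h) (Nat.find_spec h))
      (le_iInf₂ fun m hm => Nat.cast_le.2 (Nat.find_min' h hm))
    have hmem : ∀ n, (∀ i, pathPrefix n ω i ≠ y) ↔ n < Nat.find h := fun n => by
      rw [Nat.lt_find_iff]
      simp [pathPrefix, Fin.forall_iff]
    simp only [Set.indicator, Set.mem_ofPred_eq, hmem, Pi.one_apply]
    rw [hfind, tsum_eq_sum (s := range (Nat.find h)) fun n hn => if_neg (by simpa using hn),
      sum_congr rfl fun n hn => if_pos (mem_range.1 hn)]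
    simp
  · push Not at h
    have htop : hitTime y ω = ⊤ := by simp [hitTime, h]
    have hone : ∀ n, {ω | ∀ i, pathPrefix n ω i ≠ y}.indicator 1 ω = (1 : ℝ≥0∞) := fun n =>
      Set.indicator_of_mem (show ω ∈ {ω | ∀ i, pathPrefix n ω i ≠ y} from fun i => h i) 1
    rw [htop, tsum_congr hone, ENNReal.tsum_const_eq_top_of_ne_zero one_ne_zero]

variable [Fintype V]

lemma pathWeight_nonneg (hp : p ∈ Matrix.rowStochastic ℝ V) {n : ℕ} (s : Fin (n + 1) → V) :
    0 ≤ pathWeight p s :=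
  prod_nonneg fun _ _ => Matrix.nonneg_of_mem_rowStochastic hp

lemma sum_pathWeight_avoid (A : Set V) (n : ℕ) (x : V) :
    ∑ s : Fin (n + 1) → V with s 0 = x ∧ ∀ i, s i ∉ A, pathWeight p s = survivalProb p A n x := by
  induction n generalizing x with
  | zero =>
    rw [sum_filter, ← (Equiv.funUnique (Fin 1) V).symm.sum_comp]
    by_cases hx : x ∈ A
    · simp [pathWeight, survivalProb_zero, hx]
    · have hfilter : ∀ v, (v = x ∧ v ∉ A) ↔ v = x := fun v => ⟨And.left, fun h => ⟨h, h ▸ hx⟩⟩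
      simp [pathWeight, survivalProb_zero, hx, hfilter]
  | succ n ih =>
    have hcons : ∀ a (t : Fin (n + 1) → V),
        ((Fin.cons a t : Fin (n + 2) → V) 0 = x ∧ ∀ i, (Fin.cons a t : Fin (n + 2) → V) i ∉ A) ↔
          a = x ∧ a ∉ A ∧ ∀ i, t i ∉ A := by
      simp [Fin.forall_fin_succ]
    rw [sum_filter, ← (Fin.consEquiv fun _ => V).sum_comp, Fintype.sum_prod_type]
    simp only [Fin.consEquiv, Equiv.coe_fn_mk, hcons, pathWeight_cons]
    rw [Fintype.sum_eq_single x fun a ha => sum_eq_zero fun t _ => if_neg fun h => ha h.1]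
    by_cases hx : x ∈ A
    · simp [hx, survivalProb_of_mem]
    simp only [true_and, hx, not_false_eq_true, survivalProb_of_notMem_succ _ hx, ← ih, mul_sum,
      ← sum_filter]
    rw [← sum_fiberwise _ (· 0)]
    refine sum_congr rfl fun w _ => ?_
    rw [filter_filter]
    exact sum_congr (by ext; simp [and_comm]) fun t ht => by rw [(mem_filter.1 ht).2.1]

lemma sum_pathWeight (hp : p ∈ Matrix.rowStochastic ℝ V) (n : ℕ) (x : V) :
    ∑ s : Fin (n + 1) → V with s 0 = x, pathWeight p s = 1 := by
  simpa [survivalProb_empty hp] using sum_pathWeight_avoid (p := p) ∅ n x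

lemma sum_pathWeight_add_sum_pathWeight_not (hp : p ∈ Matrix.rowStochastic ℝ V) (x : V) {n : ℕ}
    (Q : (Fin (n + 1) → V) → Prop) [DecidablePred Q] :
    ∑ s with s 0 = x ∧ Q s, pathWeight p s + ∑ s with s 0 = x ∧ ¬ Q s, pathWeight p s = 1 := by
  have hsplit := sum_filter_add_sum_filter_not (univ.filter fun s : Fin (n + 1) → V => s 0 = x) Q
    (pathWeight p)
  rwa [filter_filter, filter_filter, sum_pathWeight hp n x] at hsplit

variable [MeasurableSpace V]

lemma measure_prefix_le_sum (ν : Measure (ℕ → V)) (n : ℕ) (Q : (Fin (n + 1) → V) → Prop)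
    [DecidablePred Q] : ν {ω | Q (pathPrefix n ω)} ≤ ∑ s with Q s, ν {ω | pathPrefix n ω = s} :=
  calc ν {ω | Q (pathPrefix n ω)} ≤ ν (⋃ s ∈ univ.filter Q, {ω | pathPrefix n ω = s}) :=
        measure_mono fun _ hω => Set.mem_biUnion (mem_filter.2 ⟨mem_univ _, hω⟩) rfl
    _ ≤ _ := measure_biUnion_finset_le _ _

namespace IsChainLaw

variable {P : V → Measure (ℕ → V)}

lemma measure_cylinder (hP : IsChainLaw p P) (x : V) {n : ℕ} (s : Fin (n + 1) → V) :
    P x {ω | pathPrefix n ω = s} =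
      if s 0 = x then ∏ i : Fin n, ENNReal.ofReal (p (s i.castSucc) (s i.succ)) else 0 := by
  have hset : {ω | pathPrefix n ω = s} = {ω | ∀ i ≤ n, ω i = s (Fin.clamp i n)} := by
    ext ω
    simp only [Set.mem_ofPred_eq, funext_iff, pathPrefix, Fin.forall_iff, Nat.lt_succ_iff]
    refine forall₂_congr fun i hi => ?_
    rw [show Fin.clamp i n = ⟨i, Nat.lt_succ_of_le hi⟩ from Fin.ext (min_eq_left hi)]
  rw [hset, hP.2, ← Fin.prod_univ_eq_prod_range]
  simp [Fin.clamp, Nat.le_of_lt_succ]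
  rfl

lemma ae_start (hP : IsChainLaw p P) (x : V) : ∀ᵐ ω ∂P x, ω 0 = x := by
  refine measure_mono_null (fun ω hω => hω) (nonpos_iff_eq_zero.1 <|
    (measure_prefix_le_sum (P x) 0 (· 0 ≠ x)).trans_eq (sum_eq_zero fun s hs => ?_))
  rw [hP.measure_cylinder, if_neg]
  simpa using hs

lemma eHit_self (hP : IsChainLaw p P) (x : V) : eHit P x x = 0 :=
  (lintegral_congr_ae ((hP.ae_start x).mono fun _ hω =>
    nonpos_iff_eq_zero.1 ((iInf₂_le 0 hω).trans_eq Nat.cast_zero))).trans lintegral_zero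

lemma measure_prefix_le (hP : IsChainLaw p P) (hp : p ∈ Matrix.rowStochastic ℝ V) (x : V) {n : ℕ}
    (Q : (Fin (n + 1) → V) → Prop) [DecidablePred Q] :
    P x {ω | Q (pathPrefix n ω)} ≤ ENNReal.ofReal (∑ s with s 0 = x ∧ Q s, pathWeight p s) :=
  calc P x {ω | Q (pathPrefix n ω)} ≤ ∑ s with Q s, P x {ω | pathPrefix n ω = s} :=
        measure_prefix_le_sum (P x) n Q
    _ = ∑ s with Q s, if s 0 = x then ENNReal.ofReal (pathWeight p s) else 0 := by
        refine sum_congr rfl fun s _ => ?_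
        rw [hP.measure_cylinder, pathWeight,
          ENNReal.ofReal_prod_of_nonneg fun i _ => Matrix.nonneg_of_mem_rowStochastic hp]
    _ = ENNReal.ofReal (∑ s with s 0 = x ∧ Q s, pathWeight p s) := by
        rw [ENNReal.ofReal_sum_of_nonneg fun s _ => pathWeight_nonneg hp s]
        simp only [sum_filter]
        exact sum_congr rfl fun s _ => by split_ifs <;> simp_all

lemma nullMeasurableSet_prefix (hP : IsChainLaw p P) (hp : p ∈ Matrix.rowStochastic ℝ V) (x : V)
    {n : ℕ} (Q : (Fin (n + 1) → V) → Prop) [DecidablePred Q] :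
    NullMeasurableSet {ω | Q (pathPrefix n ω)} (P x) := by
  have := hP.1 x
  refine nullMeasurableSet_of_measure_add_measure_compl_le ?_
  rw [Set.compl_ofPred, measure_univ, ← ENNReal.ofReal_one,
    ← sum_pathWeight_add_sum_pathWeight_not hp x Q,
    ENNReal.ofReal_add (sum_nonneg fun s _ => pathWeight_nonneg hp s)
      (sum_nonneg fun s _ => pathWeight_nonneg hp s)]
  exact add_le_add (hP.measure_prefix_le hp x Q) (hP.measure_prefix_le hp x (¬ Q ·))

lemma measure_prefix (hP : IsChainLaw p P) (hp : p ∈ Matrix.rowStochastic ℝ V) (x : V) {n : ℕ}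
    (Q : (Fin (n + 1) → V) → Prop) [DecidablePred Q] :
    P x {ω | Q (pathPrefix n ω)} = ENNReal.ofReal (∑ s with s 0 = x ∧ Q s, pathWeight p s) := by
  have := hP.1 x
  refine le_antisymm (hP.measure_prefix_le hp x Q) (ENNReal.le_of_add_le_add_right
    (ENNReal.ofReal_ne_top (r := ∑ s with s 0 = x ∧ ¬ Q s, pathWeight p s)) ?_)
  rw [← ENNReal.ofReal_add (sum_nonneg fun s _ => pathWeight_nonneg hp s)
      (sum_nonneg fun s _ => pathWeight_nonneg hp s),
    sum_pathWeight_add_sum_pathWeight_not hp x Q, ENNReal.ofReal_one, ← measure_univ (μ := P x),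
    ← measure_add_measure_compl₀ (hP.nullMeasurableSet_prefix hp x Q), Set.compl_ofPred]
  exact add_le_add_right (hP.measure_prefix_le hp x (¬ Q ·)) _

lemma eHit_eq_tsum (hP : IsChainLaw p P) (hp : p ∈ Matrix.rowStochastic ℝ V) (x y : V) :
    eHit P x y = ∑' n, ENNReal.ofReal (survivalProb p {y} n x) := by
  have hnm := fun n => hP.nullMeasurableSet_prefix hp x (n := n) fun s => ∀ i, s i ∉ ({y} : Set V)
  simp_rw [eHit, hitTime_eq_tsum]
  refine (lintegral_tsum fun n => measurable_one.aemeasurable.indicator₀ (hnm n)).trans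
    (tsum_congr fun n => ?_)
  exact (lintegral_indicator_one₀ (hnm n)).trans <|
    (hP.measure_prefix hp x _).trans (congrArg ENNReal.ofReal (sum_pathWeight_avoid _ n x))

lemma eHit_eq_ofReal_meanHittingTime (hP : IsChainLaw p P) (hp : p ∈ Matrix.rowStochastic ℝ V)
    {x y : V} (hsum : Summable fun n => survivalProb p {y} n x) :
    eHit P x y = ENNReal.ofReal (meanHittingTime p {y} x) := by
  rw [hP.eHit_eq_tsum hp, meanHittingTime,
    ENNReal.ofReal_tsum_of_nonneg (fun n => survivalProb_nonneg hp n x) hsum]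

end IsChainLaw

end PathSpace

section Electric

variable {V : Type*} {μ : V → V → ℝ}

lemma weightGraph_adj_pos (hsym : ∀ a b, μ a b = μ b a) (hnn : ∀ a b, 0 ≤ μ a b) {z w : V}
    (h : (weightGraph μ).Adj z w) : 0 < μ z w :=
  (hnn z w).lt_of_ne <| h.2.elim Ne.symm fun h' => by rw [hsym]; exact h'.symm

variable [Fintype V]

def laplacian (μ : V → V → ℝ) : (V → ℝ) →ₗ[ℝ] V → ℝ where
  toFun g z := ∑ w, μ z w * (g z - g w)
  map_add' f g := by
    ext z
    simp only [Pi.add_apply, ← sum_add_distrib]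
    exact sum_congr rfl fun w _ => by ring
  map_smul' c g := by
    ext z
    simp only [Pi.smul_apply, smul_eq_mul, RingHom.id_apply, mul_sum]
    exact sum_congr rfl fun w _ => by ring

lemma laplacian_apply (g : V → ℝ) (z : V) : laplacian μ g z = ∑ w, μ z w * (g z - g w) := rfl

lemma laplacian_const (c : ℝ) : laplacian μ (fun _ => c) = 0 := by
  ext z
  simp [laplacian_apply]

lemma sum_mul_laplacian (hsym : ∀ a b, μ a b = μ b a) (g k : V → ℝ) :
    ∑ z, k z * laplacian μ g z = (1 / 2) * ∑ a, ∑ b, μ a b * (g a - g b) * (k a - k b) := by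
  have hswap : ∑ a, ∑ b, μ a b * (g a - g b) * k b = -∑ a, k a * laplacian μ g a := by
    rw [sum_comm]
    simp only [laplacian_apply, mul_sum, ← sum_neg_distrib]
    exact sum_congr rfl fun a _ => sum_congr rfl fun b _ => by rw [hsym]; ring
  have hsplit : ∑ a, ∑ b, μ a b * (g a - g b) * (k a - k b) =
      ∑ a, k a * laplacian μ g a - ∑ a, ∑ b, μ a b * (g a - g b) * k b := by
    simp only [laplacian_apply, mul_sum, ← sum_sub_distrib]
    exact sum_congr rfl fun a _ => sum_congr rfl fun b _ => by ring
  rw [hsplit, hswap]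
  ring

lemma sum_laplacian (hsym : ∀ a b, μ a b = μ b a) (g : V → ℝ) : ∑ z, laplacian μ g z = 0 := by
  simpa using sum_mul_laplacian hsym g 1

lemma energy_eq_sum_mul_laplacian (hsym : ∀ a b, μ a b = μ b a) (g : V → ℝ) :
    energy μ g = ∑ z, g z * laplacian μ g z := by
  rw [sum_mul_laplacian hsym, energy]
  congr 1
  exact sum_congr rfl fun a _ => sum_congr rfl fun b _ => by ring

lemma energy_nonneg (hnn : ∀ a b, 0 ≤ μ a b) (g : V → ℝ) : 0 ≤ energy μ g :=
  mul_nonneg (by norm_num) <| sum_nonneg fun a _ => sum_nonneg fun b _ =>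
    mul_nonneg (hnn a b) (sq_nonneg _)

lemma energy_add (u w : V → ℝ) :
    energy μ (u + w) =
      energy μ u + energy μ w + ∑ a, ∑ b, μ a b * (u a - u b) * (w a - w b) := by
  simp only [energy, Pi.add_apply, ← mul_add, mul_sum, ← sum_add_distrib]
  exact sum_congr rfl fun a _ => sum_congr rfl fun b _ => by ring

lemma energy_le_of_laplacian_eq_zero (hsym : ∀ a b, μ a b = μ b a) (hnn : ∀ a b, 0 ≤ μ a b)
    {x y : V} {u g : V → ℝ} (hu : ∀ z, z ≠ x → z ≠ y → laplacian μ u z = 0)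
    (hx : g x = u x) (hy : g y = u y) : energy μ u ≤ energy μ g := by
  have hcross : ∑ a, ∑ b, μ a b * (u a - u b) * ((g - u) a - (g - u) b) = 0 := by
    rw [← mul_right_inj' (one_div_ne_zero (two_ne_zero' ℝ)), ← sum_mul_laplacian hsym, mul_zero]
    refine sum_eq_zero fun z _ => ?_
    by_cases hzx : z = x
    · simp [hzx, hx]
    by_cases hzy : z = y
    · simp [hzy, hy]
    rw [hu z hzx hzy, mul_zero]
  have hadd := energy_add (μ := μ) u (g - u)
  rw [add_sub_cancel, hcross, add_zero] at hadd
  linarith [energy_nonneg hnn (g - u)]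

lemma Reff_eq_inv_energy (hsym : ∀ a b, μ a b = μ b a) (hnn : ∀ a b, 0 ≤ μ a b) {x y : V}
    (hxy : x ≠ y) {u : V → ℝ} (hu : ∀ z, z ≠ x → z ≠ y → laplacian μ u z = 0) (hux : u x = 1)
    (huy : u y = 0) : Reff μ x y = (energy μ u)⁻¹ := by
  rw [Reff, if_neg hxy]
  congr 1
  refine IsLeast.csInf_eq ⟨⟨u, hux, huy, rfl⟩, ?_⟩
  rintro _ ⟨g, hgx, hgy, rfl⟩
  exact energy_le_of_laplacian_eq_zero hsym hnn hu (hgx.trans hux.symm) (hgy.trans huy.symm)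

lemma Reff_eq_div_laplacian (hsym : ∀ a b, μ a b = μ b a) (hnn : ∀ a b, 0 ≤ μ a b) {x y : V}
    (hxy : x ≠ y) {f : V → ℝ} (hf : ∀ z, z ≠ x → z ≠ y → laplacian μ f z = 0)
    (hfxy : f x ≠ f y) : Reff μ x y = (f x - f y) / laplacian μ f x := by
  set u := (f x - f y)⁻¹ • (f - fun _ => f y)
  have hsub : f x - f y ≠ 0 := sub_ne_zero.2 hfxy
  have hlap : laplacian μ u = (f x - f y)⁻¹ • laplacian μ f := by
    rw [map_smul, map_sub, laplacian_const, sub_zero]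
  have hux : u x = 1 := by simp [u, hsub]
  have huy : u y = 0 := by simp [u]
  have hu : ∀ z, z ≠ x → z ≠ y → laplacian μ u z = 0 := fun z hzx hzy => by
    simp [hlap, hf z hzx hzy]
  have henergy : energy μ u = laplacian μ u x := by
    rw [energy_eq_sum_mul_laplacian hsym, sum_eq_single x, hux, one_mul]
    · intro z _ hzx
      by_cases hzy : z = y
      · rw [hzy, huy, zero_mul]
      · rw [hu z hzx hzy, mul_zero]
    · simp
  rw [Reff_eq_inv_energy hsym hnn hxy hu hux huy, henergy, hlap, Pi.smul_apply, smul_eq_mul,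
    mul_inv, inv_inv, div_eq_mul_inv, mul_comm]

lemma sum_weight_pos_of_connected [Nontrivial V] (hsym : ∀ a b, μ a b = μ b a)
    (hnn : ∀ a b, 0 ≤ μ a b) (hconn : (weightGraph μ).Connected) (z : V) : 0 < ∑ w, μ z w := by
  obtain ⟨w, hw⟩ := hconn.preconnected.exists_adj_of_nontrivial z
  exact (weightGraph_adj_pos hsym hnn hw).trans_le (single_le_sum (fun w _ => hnn z w) (mem_univ w))

lemma walkStep_mem_rowStochastic (hnn : ∀ a b, 0 ≤ μ a b) (hdeg : ∀ z, 0 < ∑ w, μ z w) :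
    walkStep μ ∈ Matrix.rowStochastic ℝ V :=
  Matrix.mem_rowStochastic_iff_sum.2 ⟨fun z w => div_nonneg (hnn z w) (hdeg z).le, fun z => by
    simp only [walkStep, ← sum_div, div_self (hdeg z).ne']⟩

lemma laplacian_meanHittingTime (hdeg : ∀ z, 0 < ∑ w, μ z w) {A : Set V}
    (hsum : ∀ w, Summable fun n => survivalProb (walkStep μ) A n w) {z : V} (hz : z ∉ A) :
    laplacian μ (meanHittingTime (walkStep μ) A) z = ∑ w, μ z w := by
  have hh := meanHittingTime_of_notMem hsum hz
  simp only [walkStep, div_mul_eq_mul_div, ← sum_div] at hh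
  rw [laplacian_apply]
  simp only [mul_sub, sum_sub_distrib, ← sum_mul]
  rw [hh]
  field_simp [(hdeg z).ne']
  ring

lemma Reff_eq_meanHittingTime_add_div_totalWeight (hsym : ∀ a b, μ a b = μ b a)
    (hnn : ∀ a b, 0 ≤ μ a b) (hdeg : ∀ z, 0 < ∑ w, μ z w)
    (hsum : ∀ a z, Summable fun n => survivalProb (walkStep μ) {a} n z) {x y : V} (hxy : x ≠ y) :
    Reff μ x y = (meanHittingTime (walkStep μ) {y} x + meanHittingTime (walkStep μ) {x} y) /
      totalWeight μ := by
  set hx := meanHittingTime (walkStep μ) {x}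
  set hy := meanHittingTime (walkStep μ) {y}
  have hp := walkStep_mem_rowStochastic hnn hdeg
  have hlap : ∀ z, z ≠ x → z ≠ y → laplacian μ (hy - hx) z = 0 := fun z hzx hzy => by
    rw [map_sub, Pi.sub_apply, laplacian_meanHittingTime hdeg (hsum y) hzy,
      laplacian_meanHittingTime hdeg (hsum x) hzx, sub_self]
  have hlapx : laplacian μ (hy - hx) x = totalWeight μ := by
    have h0 := sum_laplacian hsym hx
    rw [← add_sum_erase _ _ (mem_univ x), sum_congr rfl fun z hz =>
      laplacian_meanHittingTime hdeg (hsum x) (ne_of_mem_erase hz)] at h0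
    rw [map_sub, Pi.sub_apply, laplacian_meanHittingTime hdeg (hsum y) hxy, totalWeight,
      ← add_sum_erase univ (fun z => ∑ w, μ z w) (mem_univ x)]
    linarith
  have hdiff : (hy - hx) x - (hy - hx) y = hy x + hx y := by
    simp [hx, hy, meanHittingTime_of_mem]
  have hpos : 0 < hy x + hx y := add_pos_of_pos_of_nonneg
    (one_pos.trans_le (one_le_meanHittingTime hp (hsum y) hxy)) (meanHittingTime_nonneg hp _ y)
  rw [Reff_eq_div_laplacian hsym hnn hxy hlap (sub_ne_zero.1 (hdiff ▸ hpos.ne')), hdiff, hlapx]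

end Electric

end

open MeasureTheory ENNReal Filter ProbabilityTheory
/-- Commute time identity -/
theorem statement2 {V : Type*} [Fintype V] [MeasurableSpace V]
    (μ : V → V → ℝ) (hsym : ∀ x y, μ x y = μ y x) (hnn : ∀ x y, 0 ≤ μ x y)
    (hconn : (weightGraph μ).Connected)
    (P : V → Measure (ℕ → V))
    (hP : IsChainLaw (walkStep μ) P) :
    ∀ x y : V, eHit P x y + eHit P y x = ENNReal.ofReal (totalWeight μ * Reff μ x y) := by
  intro x y
  rcases eq_or_ne x y with rfl | hxy
  · rw [hP.eHit_self, Reff, if_pos rfl, mul_zero, ENNReal.ofReal_zero, add_zero]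
  have : Nontrivial V := ⟨⟨x, y, hxy⟩⟩
  have hdeg := sum_weight_pos_of_connected hsym hnn hconn
  have hp := walkStep_mem_rowStochastic hnn hdeg
  have hsum : ∀ a z, Summable fun n => survivalProb (walkStep μ) {a} n z := fun a =>
    summable_survivalProb hp (fun z w h => div_pos (weightGraph_adj_pos hsym hnn h) (hdeg z))
      hconn (Set.singleton_nonempty a)
  have hW : 0 < totalWeight μ := sum_pos (fun z _ => hdeg z) univ_nonempty
  rw [hP.eHit_eq_ofReal_meanHittingTime hp (hsum y x),
    hP.eHit_eq_ofReal_meanHittingTime hp (hsum x y),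
    ← ENNReal.ofReal_add (meanHittingTime_nonneg hp _ x) (meanHittingTime_nonneg hp _ y),
    Reff_eq_meanHittingTime_add_div_totalWeight hsym hnn hdeg hsum hxy, mul_div_cancel₀ _ hW.ne']
end

section
/- Let (S_n)_{n∈Z} be a two-sided simple random walk on Z^d started at 0, d ≥ 5, and let 0 < T_1 < T_2 < ⋯ enumerate the positive cut-times (times n with S_{(−∞,n]} ∩ S_{[n+1,∞)} = ∅). For the range graph G^N with vertices {S_0,…,S_N} and edges {S_{n−1},S_n}, every path in G^N from S_0 to the cut-point C_M = S_{T_M} (where T_M ≤ N < T_{M+1}) must traverse each of the edges {S_{T_n}, S_{T_n+1}} for 1 ≤ n ≤ M−1, and hence by Nash-Williams R_eff(S_0, C_M) ≥ M − 1. -/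
open MeasureTheory ENNReal Filter ProbabilityTheory
/-- `n` is a cut-time of the two-sided path `S`: `S_{(-∞,n]} ∩ S_{[n+1,∞)} = ∅`. -/
def IsCutTime {d : ℕ} (S : ℤ → Fin d → ℤ) (n : ℤ) : Prop :=
  ∀ a b : ℤ, a ≤ n → n < b → S a ≠ S b

/-- Vertex set of the range graph: `{S_0, …, S_N}`. -/
def rangeFinset {d : ℕ} (S : ℤ → Fin d → ℤ) (N : ℕ) : Finset (Fin d → ℤ) :=
  Finset.image (fun k : Fin (N + 1) => S ((k : ℕ) : ℤ)) Finset.univ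

/-- The range graph `G^N` with vertices `{S_0, …, S_N}` and edges `{S_{n-1}, S_n}`. -/
def rangeGraph {d : ℕ} (S : ℤ → Fin d → ℤ) (N : ℕ) :
    SimpleGraph {x : Fin d → ℤ // x ∈ rangeFinset S N} where
  Adj u v := u ≠ v ∧ ∃ n : ℕ, n < N ∧ s(u.1, v.1) = s(S (n : ℤ), S ((n : ℤ) + 1))
  symm := by
    constructor
    rintro u v ⟨h1, n, hn, he⟩
    refine ⟨h1.symm, n, hn, ?_⟩
    rw [Sym2.eq_swap]; exact he
  loopless := ⟨fun u h => h.1 rfl⟩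

/-- The vertex `S_n` of the range graph, for `n ≤ N`. -/
def rangeVert {d : ℕ} (S : ℤ → Fin d → ℤ) (N : ℕ) (n : ℕ) (h : n ≤ N) :
    {x : Fin d → ℤ // x ∈ rangeFinset S N} :=
  ⟨S (n : ℤ), Finset.mem_image.mpr ⟨⟨n, Nat.lt_succ_of_le h⟩, Finset.mem_univ _, rfl⟩⟩

/-!
The edges leaving the set of vertices visited up to a cut-time `t` all equal
`{S_t, S_{t+1}}`: an edge `{S_n, S_{n+1}}` from the past to the future with `n ≠ t` would put a
point of `S_{(-∞,t]}` into `S_{[t+1,∞)}`. Hence every walk from `S_0` to `S_{T_M}` uses it.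
For the resistance, take the potential `f v = #{1 ≤ n < M : v visited by time T_n} / (M - 1)`,
which is `1` at `S_0` and `0` at `S_{T_M}`. As the cut edges are distinct, it changes by
`1/(M - 1)` across each of them and not at all across any other edge, so its energy is at most
`1/(M - 1)`.
-/

open Finset

section Energy

variable {V : Type*} [Fintype V]

lemma energy_nonneg_s14 {μ : V → V → ℝ} (hμ : ∀ u v, 0 ≤ μ u v) (f : V → ℝ) : 0 ≤ energy μ f :=
  mul_nonneg (by norm_num) <| sum_nonneg fun u _ => sum_nonneg fun v _ =>
    mul_nonneg (hμ u v) (sq_nonneg _)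

lemma energy_const_mul (μ : V → V → ℝ) (c : ℝ) (f : V → ℝ) :
    energy μ (fun v => c * f v) = c ^ 2 * energy μ f := by
  simp only [energy, mul_sum]
  congr 1; ext u; congr 1; ext v; ring

lemma Reff_nonneg {μ : V → V → ℝ} (hμ : ∀ u v, 0 ≤ μ u v) (x y : V) : 0 ≤ Reff μ x y := by
  unfold Reff
  split_ifs
  · rfl
  · exact inv_nonneg.mpr <| Real.sInf_nonneg <| by
      rintro _ ⟨f, -, -, rfl⟩
      exact energy_nonneg_s14 hμ f

end Energy

namespace SimpleGraph

variable {V : Type*} {G : SimpleGraph V}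

lemma unitWeight_nonneg (G : SimpleGraph V) (u v : V) : 0 ≤ unitWeight G u v := by
  unfold unitWeight; split_ifs <;> norm_num

lemma Walk.mem_edges_of_boundary_eq {x y : V} (p : G.Walk x y) {A : Set V} {e : Sym2 V}
    (hx : x ∈ A) (hy : y ∉ A) (hA : ∀ u v, G.Adj u v → u ∈ A → v ∉ A → s(u, v) = e) :
    e ∈ p.edges := by
  obtain ⟨d, hd, hd₁, hd₂⟩ := p.exists_boundary_dart A hx hy
  rw [← hA _ _ d.adj hd₁ hd₂]
  exact List.mem_map_of_mem hd

open scoped Classical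

variable {ι : Type*} [Fintype ι] {A : ι → Set V} {e : ι → Sym2 V}

lemma card_filter_mem_le_add (hA : ∀ i u v, G.Adj u v → u ∈ A i → v ∉ A i → s(u, v) = e i)
    {u v : V} (h : G.Adj u v) :
    #{i | u ∈ A i} ≤ #{i | v ∈ A i} + #{i | e i = s(u, v)} := by
  refine (card_le_card fun i hi => ?_).trans (card_union_le _ _)
  simp only [mem_filter, mem_univ, true_and, mem_union] at hi ⊢
  by_cases hv : v ∈ A i
  · exact Or.inl hv
  · exact Or.inr (hA i u v h hi hv).symm

variable [Fintype V]

lemma sq_sub_le_energy_unitWeight (f : V → ℝ) {u v : V} (h : G.Adj u v) :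
    (f u - f v) ^ 2 ≤ energy (unitWeight G) f := by
  set g : V → V → ℝ := fun a b => unitWeight G a b * (f a - f b) ^ 2
  have hg : ∀ a b, 0 ≤ g a b := fun a b => mul_nonneg (unitWeight_nonneg G a b) (sq_nonneg _)
  have huv : g u v = (f u - f v) ^ 2 := by simp [g, unitWeight, h]
  have hvu : g v u = (f u - f v) ^ 2 := by simp [g, unitWeight, h.symm]; ring
  have hrow : ∀ a b, g a b ≤ ∑ b', g a b' := fun a b =>
    single_le_sum (fun b' _ => hg a b') (mem_univ b)
  have hpair : ∑ a ∈ {u, v}, ∑ b, g a b ≤ ∑ a, ∑ b, g a b :=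
    sum_le_sum_of_subset_of_nonneg (subset_univ _) fun a _ _ => sum_nonneg fun b _ => hg a b
  rw [sum_pair h.ne] at hpair
  unfold energy
  linarith [hrow u v, hrow v u]

lemma Walk.abs_sub_le_length_mul_sqrt_energy (f : V → ℝ) {u v : V} (p : G.Walk u v) :
    |f u - f v| ≤ p.length * √(energy (unitWeight G) f) := by
  induction p with
  | nil => simp
  | @cons a b c h p ih =>
    have hab := Real.abs_le_sqrt (sq_sub_le_energy_unitWeight f h)
    calc |f a - f c| ≤ |f a - f b| + |f b - f c| := abs_sub_le _ _ _
      _ ≤ _ := by rw [length_cons]; push_cast; linarith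

lemma inv_le_Reff_of_energy_le {x y : V} (hr : G.Reachable x y) (hxy : x ≠ y) {f : V → ℝ}
    (hfx : f x = 1) (hfy : f y = 0) {c : ℝ} (hc : energy (unitWeight G) f ≤ c) :
    c⁻¹ ≤ Reff (unitWeight G) x y := by
  obtain ⟨p⟩ := hr
  set E := {E : ℝ | ∃ g : V → ℝ, g x = 1 ∧ g y = 0 ∧ E = energy (unitWeight G) g}
  have hL : (0 : ℝ) < p.length := by
    exact_mod_cast Nat.pos_of_ne_zero fun h => hxy (p.eq_of_length_eq_zero h)
  -- `⁻¹` is antitone only on positive reals: along a walk of length `L`, a unit potential drop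
  -- forces energy at least `L⁻²`.
  have hlow : ∀ r ∈ E, (p.length : ℝ)⁻¹ ^ 2 ≤ r := by
    rintro _ ⟨g, hgx, hgy, rfl⟩
    have h := p.abs_sub_le_length_mul_sqrt_energy g
    rw [hgx, hgy, sub_zero, abs_one, ← div_le_iff₀' hL, one_div] at h
    exact (Real.le_sqrt (by positivity) (energy_nonneg_s14 (unitWeight_nonneg G) g)).mp h
  have hf : energy (unitWeight G) f ∈ E := ⟨f, hfx, hfy, rfl⟩
  have hpos : 0 < sInf E := (by positivity : (0 : ℝ) < _).trans_le (le_csInf ⟨_, hf⟩ hlow)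
  rw [Reff, if_neg hxy]
  exact inv_anti₀ hpos <| (csInf_le ⟨0, fun r hr => (sq_nonneg _).trans (hlow r hr)⟩ hf).trans hc

lemma sum_sum_ite_mk_eq_le_two (z : Sym2 V) :
    ∑ u : V, ∑ v : V, (if s(u, v) = z then (1 : ℝ) else 0) ≤ 2 := by
  induction z using Sym2.ind with
  | h a b =>
    rw [← Fintype.sum_prod_type' (fun u v => if s(u, v) = s(a, b) then (1 : ℝ) else 0),
      sum_boole]
    have hsub : ({p | s(p.1, p.2) = s(a, b)} : Finset (V × V)) ⊆ {(a, b), (b, a)} := by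
      intro p hp
      simp only [mem_filter, mem_univ, true_and] at hp
      simpa [Prod.swap] using hp
    exact_mod_cast (card_le_card hsub).trans card_le_two

lemma energy_card_filter_mem_le (he : Function.Injective e)
    (hA : ∀ i u v, G.Adj u v → u ∈ A i → v ∉ A i → s(u, v) = e i) :
    energy (unitWeight G) (fun v => (#{i | v ∈ A i} : ℝ)) ≤ Fintype.card ι := by
  have hpair : ∀ u v, unitWeight G u v * ((#{i | u ∈ A i} : ℝ) - #{i | v ∈ A i}) ^ 2 ≤
      ∑ i, if s(u, v) = e i then (1 : ℝ) else 0 := by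
    intro u v
    rw [sum_boole]
    by_cases h : G.Adj u v
    · have h₁ := card_filter_mem_le_add hA h
      have h₂ := card_filter_mem_le_add hA h.symm
      rw [Sym2.eq_swap] at h₂
      have hD : #{i | e i = s(u, v)} ≤ 1 :=
        card_le_one.mpr fun i hi j hj => he <| by
          simp only [mem_filter, mem_univ, true_and] at hi hj; rw [hi, hj]
      simp only [unitWeight, if_pos h, one_mul, eq_comm (a := s(u, v))]
      have h₁' : (#{i | u ∈ A i} : ℝ) ≤ #{i | v ∈ A i} + #{i | e i = s(u, v)} := by
        exact_mod_cast h₁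
      have h₂' : (#{i | v ∈ A i} : ℝ) ≤ #{i | u ∈ A i} + #{i | e i = s(u, v)} := by
        exact_mod_cast h₂
      have hD' : (#{i | e i = s(u, v)} : ℝ) ≤ 1 := by exact_mod_cast hD
      nlinarith
    · simp [unitWeight, h]
  calc energy (unitWeight G) (fun v => (#{i | v ∈ A i} : ℝ))
      ≤ 1 / 2 * ∑ u, ∑ v, ∑ i, if s(u, v) = e i then (1 : ℝ) else 0 := by
        unfold energy; gcongr with u _ v _; exact hpair u v
    _ = 1 / 2 * ∑ i, ∑ u, ∑ v, if s(u, v) = e i then (1 : ℝ) else 0 := by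
        congr 1
        calc _ = ∑ u, ∑ i, ∑ v, _ := sum_congr rfl fun u _ => sum_comm
          _ = _ := sum_comm
    _ ≤ 1 / 2 * ∑ _i : ι, 2 := by gcongr with i; exact sum_sum_ite_mk_eq_le_two (e i)
    _ = Fintype.card ι := by simp; ring

/-- Nash-Williams inequality for disjoint singleton edge cutsets. -/
theorem card_le_Reff_of_boundary_eq {x y : V} (hr : G.Reachable x y) (he : Function.Injective e)
    (hx : ∀ i, x ∈ A i) (hy : ∀ i, y ∉ A i)
    (hA : ∀ i u v, G.Adj u v → u ∈ A i → v ∉ A i → s(u, v) = e i) :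
    (Fintype.card ι : ℝ) ≤ Reff (unitWeight G) x y := by
  rcases isEmpty_or_nonempty ι with hι | ⟨⟨i₀⟩⟩
  · simpa using Reff_nonneg (unitWeight_nonneg G) x y
  have hk : (0 : ℝ) < Fintype.card ι := by exact_mod_cast Fintype.card_pos_iff.mpr ⟨i₀⟩
  set f : V → ℝ := fun v => (Fintype.card ι : ℝ)⁻¹ * #{i | v ∈ A i}
  have hfx : f x = 1 := by
    simp only [f, filter_true_of_mem fun i _ => hx i, card_univ]
    exact inv_mul_cancel₀ hk.ne'
  have hfy : f y = 0 := by simp [f, hy]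
  have hf : energy (unitWeight G) f ≤ (Fintype.card ι : ℝ)⁻¹ := by
    rw [energy_const_mul]
    calc (Fintype.card ι : ℝ)⁻¹ ^ 2 * energy (unitWeight G) (fun v => (#{i | v ∈ A i} : ℝ))
        ≤ (Fintype.card ι : ℝ)⁻¹ ^ 2 * Fintype.card ι := by
          gcongr; exact energy_card_filter_mem_le he hA
      _ = (Fintype.card ι : ℝ)⁻¹ := by field_simp
  simpa using inv_le_Reff_of_energy_le hr (fun h => hy i₀ (h ▸ hx i₀)) hfx hfy hf

end SimpleGraph

section RangeGraph

variable {d : ℕ} {S : ℤ → Fin d → ℤ} {N : ℕ}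

def pastSet (S : ℤ → Fin d → ℤ) (N t : ℕ) : Set {x : Fin d → ℤ // x ∈ rangeFinset S N} :=
  {v | ∃ j : ℕ, j ≤ t ∧ S j = v.1}

lemma rangeVert_mem_pastSet {n t : ℕ} (hn : n ≤ N) (h : n ≤ t) :
    rangeVert S N n hn ∈ pastSet S N t :=
  ⟨n, h, rfl⟩

lemma rangeVert_notMem_pastSet {n t : ℕ} (hc : IsCutTime S t) (hn : n ≤ N) (h : t < n) :
    rangeVert S N n hn ∉ pastSet S N t := by
  rintro ⟨j, hj, hjn⟩
  exact hc j n (by exact_mod_cast hj) (by exact_mod_cast h) hjn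

lemma rangeGraph_boundary_eq {t : ℕ} (hc : IsCutTime S t) (ht : t + 1 ≤ N)
    (u v : {x : Fin d → ℤ // x ∈ rangeFinset S N}) (h : (rangeGraph S N).Adj u v)
    (hu : u ∈ pastSet S N t) (hv : v ∉ pastSet S N t) :
    s(u, v) = s(rangeVert S N t (by omega), rangeVert S N (t + 1) ht) := by
  obtain ⟨-, n, hnN, huv⟩ := h
  obtain ⟨j, hjt, hju⟩ := hu
  rcases Sym2.eq_iff.mp huv with ⟨hu, hv'⟩ | ⟨hu, hv'⟩
  · have hnt : n = t := by
      refine le_antisymm ?_ ?_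
      · by_contra! htn
        exact hc j n (by exact_mod_cast hjt) (by exact_mod_cast htn) (hju.trans hu)
      · by_contra! hnt
        exact hv ⟨n + 1, hnt, by rw [hv']; push_cast; rfl⟩
    subst hnt
    congr 1 <;> apply Subtype.ext
    · exact hu
    · rw [hv']; rfl
  · have htn : t < n := by
      by_contra! hnt
      exact hv ⟨n, hnt, hv'.symm⟩
    exact absurd (hju.trans hu) (hc j (n + 1) (by exact_mod_cast hjt) (by omega))

lemma sym2_rangeVert_ne {t t' : ℕ} (hc : IsCutTime S t) (htt' : t < t') (ht : t + 1 ≤ N)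
    (ht' : t' + 1 ≤ N) :
    s(rangeVert S N t (by omega), rangeVert S N (t + 1) ht) ≠
      s(rangeVert S N t' (by omega), rangeVert S N (t' + 1) ht') := by
  intro heq
  have hmem := rangeVert_mem_pastSet (S := S) (Nat.le_of_succ_le ht) le_rfl
  rcases Sym2.eq_iff.mp heq with ⟨h, -⟩ | ⟨h, -⟩ <;> rw [h] at hmem
  · exact rangeVert_notMem_pastSet hc _ htt' hmem
  · exact rangeVert_notMem_pastSet hc _ (by omega) hmem

lemma rangeGraph_reachable_rangeVert {n : ℕ} (hn : n ≤ N) :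
    (rangeGraph S N).Reachable (rangeVert S N 0 (Nat.zero_le N)) (rangeVert S N n hn) := by
  induction n with
  | zero => rfl
  | succ n ih =>
    refine (ih (by omega)).trans ?_
    by_cases heq : rangeVert S N n (by omega) = rangeVert S N (n + 1) hn
    · rw [heq]
    · exact SimpleGraph.Adj.reachable ⟨heq, n, by omega, rfl⟩

end RangeGraph

theorem statement14_general (d : ℕ) (S : ℤ → Fin d → ℤ)
    (T : ℕ → ℕ) (hmono : StrictMono T)
    (hcut : ∀ n : ℕ, 1 ≤ n → IsCutTime S (T n : ℤ))
    (N M : ℕ) (hM : 1 ≤ M) (hTM : T M ≤ N) :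
    (∀ (w : (rangeGraph S N).Walk (rangeVert S N 0 (Nat.zero_le N)) (rangeVert S N (T M) hTM)),
      ∀ n : ℕ, 1 ≤ n → n ≤ M - 1 → ∀ (h1 : T n ≤ N) (h2 : T n + 1 ≤ N),
        s(rangeVert S N (T n) h1, rangeVert S N (T n + 1) h2) ∈ w.edges) ∧
    (M : ℝ) - 1 ≤
      Reff (unitWeight (rangeGraph S N)) (rangeVert S N 0 (Nat.zero_le N))
        (rangeVert S N (T M) hTM) := by
  refine ⟨fun w n hn hnM _ h2 => w.mem_edges_of_boundary_eq
    (rangeVert_mem_pastSet _ (Nat.zero_le _))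
    (rangeVert_notMem_pastSet (hcut n hn) hTM (hmono (by omega)))
    (rangeGraph_boundary_eq (hcut n hn) h2), ?_⟩
  set τ : Fin (M - 1) → ℕ := fun i => T (i + 1)
  have hτ_lt : ∀ i, τ i < T M := fun i => hmono (by omega)
  have hτ_cut : ∀ i, IsCutTime S (τ i) := fun i => hcut _ (by omega)
  have hτ_mono : StrictMono τ := fun i j hij => hmono (by simpa using hij)
  have hτN : ∀ i, τ i + 1 ≤ N := fun i => (hτ_lt i).trans_le hTM
  have he : Function.Injective fun i =>
      s(rangeVert S N (τ i) (by have := hτN i; omega), rangeVert S N (τ i + 1) (hτN i)) := by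
    intro i j hij
    by_contra hne
    rcases lt_or_gt_of_ne hne with h | h
    · exact sym2_rangeVert_ne (hτ_cut i) (hτ_mono h) _ _ hij
    · exact sym2_rangeVert_ne (hτ_cut j) (hτ_mono h) _ _ hij.symm
  calc (M : ℝ) - 1 = Fintype.card (Fin (M - 1)) := by simp [Nat.cast_pred hM]
    _ ≤ _ := SimpleGraph.card_le_Reff_of_boundary_eq (rangeGraph_reachable_rangeVert hTM) he
      (fun _ => rangeVert_mem_pastSet _ (Nat.zero_le _))
      (fun i => rangeVert_notMem_pastSet (hτ_cut i) hTM (hτ_lt i))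
      (fun i => rangeGraph_boundary_eq (hτ_cut i) (hτN i))

/-- for a two-sided nearest-neighbour path `S` on `ℤ^d`, `d ≥ 5`, with positive
cut-times `T_1 < T_2 < ⋯` and `T_M ≤ N < T_{M+1}`, every path in the range graph `G^N` from
`S_0` to the cut-point `C_M = S_{T_M}` traverses each edge `{S_{T_n}, S_{T_n + 1}}`,
`1 ≤ n ≤ M - 1`; hence by Nash–Williams `R_eff(S_0, C_M) ≥ M - 1`. -/
theorem statement14 (d : ℕ) (hd : 5 ≤ d) (S : ℤ → Fin d → ℤ)
    (hS0 : S 0 = 0)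
    (hstep : ∀ n : ℤ, (∑ i : Fin d, (S (n + 1) i - S n i).natAbs) = 1)
    (T : ℕ → ℕ) (hmono : StrictMono T) (hT1 : 0 < T 1)
    (hcut : ∀ n : ℕ, 1 ≤ n → IsCutTime S (T n : ℤ))
    (N M : ℕ) (hM : 1 ≤ M) (hTM : T M ≤ N) (hN : N < T (M + 1)) :
    (∀ (w : (rangeGraph S N).Walk (rangeVert S N 0 (Nat.zero_le N)) (rangeVert S N (T M) hTM)),
      ∀ n : ℕ, 1 ≤ n → n ≤ M - 1 → ∀ (h1 : T n ≤ N) (h2 : T n + 1 ≤ N),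
        s(rangeVert S N (T n) h1, rangeVert S N (T n + 1) h2) ∈ w.edges) ∧
    (M : ℝ) - 1 ≤
      Reff (unitWeight (rangeGraph S N)) (rangeVert S N 0 (Nat.zero_le N))
        (rangeVert S N (T M) hTM) :=
  statement14_general d S T hmono hcut N M hM hTM
end
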